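/- arXiv:1208.1822 — 2 statements merged into one kernel-verified Lean document; each statement's English description precedes it below -/
import Mathlib

section
/- Suppose I and I' are lexsegment ideals of S = K[x_1,…,x_n], generated by monomials of degree d and d' respectively, with μ(I) = μ(I') and d' ≥ d. Then I' = x_1^{d'−d} · I. -/
noncomputable section

open MvPolynomial

/-- The total degree of an exponent vector. -/
def edeg {n : ℕ} (a : Fin n →₀ ℕ) : ℕ := ∑ i, a i

/-- An exponent vector is squarefree if every exponent is at most 1. -/
def IsSqfree {n : ℕ} (a : Fin n →₀ ℕ) : Prop := ∀ i, a i ≤ 1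

/-- The set of exponent vectors of monomials belonging to the ideal `I`. -/
def expSet {K : Type} [Field K] {n : ℕ} (I : Ideal (MvPolynomial (Fin n) K)) :
    Set (Fin n →₀ ℕ) := {a | (monomial a (1 : K)) ∈ I}

/-- `I` is generated by monomials `x^a` with `a` satisfying the predicate `P`. -/
def GenBy {K : Type} [Field K] {n : ℕ} (I : Ideal (MvPolynomial (Fin n) K))
    (P : (Fin n →₀ ℕ) → Prop) : Prop :=
  ∃ G : Set (Fin n →₀ ℕ), (∀ a ∈ G, P a) ∧
    I = Ideal.span ((fun a => (monomial a (1 : K))) '' G)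

/-- `I` is a monomial ideal. -/
def IsMonomialIdeal {K : Type} [Field K] {n : ℕ} (I : Ideal (MvPolynomial (Fin n) K)) : Prop :=
  GenBy I fun _ => True

/-- `I` is a squarefree monomial ideal. -/
def IsSqfreeMonomialIdeal {K : Type} [Field K] {n : ℕ}
    (I : Ideal (MvPolynomial (Fin n) K)) : Prop := GenBy I IsSqfree

/-- `x^a >_lex x^b` in the lexicographic order with `x_1 > x_2 > ⋯ > x_n`. -/
def lexGT {n : ℕ} (a b : Fin n →₀ ℕ) : Prop :=
  ∃ i : Fin n, (∀ j : Fin n, j < i → a j = b j) ∧ b i < a i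

/-- `I` is a lexsegment ideal. -/
def IsLexsegment {K : Type} [Field K] {n : ℕ} (I : Ideal (MvPolynomial (Fin n) K)) : Prop :=
  IsMonomialIdeal I ∧ ∀ a b : Fin n →₀ ℕ, (monomial a (1 : K)) ∈ I → edeg b = edeg a →
    lexGT b a → (monomial b (1 : K)) ∈ I

/-- `I` is a squarefree lexsegment ideal. -/
def IsSqfreeLexsegment {K : Type} [Field K] {n : ℕ}
    (I : Ideal (MvPolynomial (Fin n) K)) : Prop :=
  IsSqfreeMonomialIdeal I ∧ ∀ a b : Fin n →₀ ℕ, IsSqfree a → IsSqfree b →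
    (monomial a (1 : K)) ∈ I → edeg b = edeg a → lexGT b a → (monomial b (1 : K)) ∈ I

/-- The minimal number of generators of an ideal. -/
def mu {K : Type} [Field K] {n : ℕ} (I : Ideal (MvPolynomial (Fin n) K)) : ℕ :=
  sInf {m | ∃ G : Finset (MvPolynomial (Fin n) K), G.card = m ∧ I = Ideal.span (G : Set _)}

/-- `ξ_k = ∑_{j=1}^k C(2j-1, j)`. -/
def xi (k : ℕ) : ℕ := ∑ j ∈ Finset.Icc 1 k, (2 * j - 1).choose j

/-- The Hilbert function of `I`: the `K`-dimension of the degree-`j` component of `I`. -/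
def hilb {K : Type} [Field K] {n : ℕ} (I : Ideal (MvPolynomial (Fin n) K)) (j : ℕ) : ℕ :=
  Module.finrank K ↥((Submodule.restrictScalars K I) ⊓ homogeneousSubmodule (Fin n) K j)

/-- The Hilbert function of `I` extended to all integer degrees. -/
def hilbZ {K : Type} [Field K] {n : ℕ} (I : Ideal (MvPolynomial (Fin n) K)) (j : ℤ) : ℕ :=
  if 0 ≤ j then hilb I j.toNat else 0

/-- The Hilbert function of a standard graded polynomial ring in `d` variables,
at degree `t ∈ ℤ`. -/
def polyHilb (d : ℕ) (t : ℤ) : ℕ :=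
  if t < 0 then 0 else if d = 0 then (if t = 0 then 1 else 0) else (t.toNat + (d - 1)).choose (d - 1)

/-- A (standard graded) Hilbert decomposition of `I` all of whose retracts are polynomial
rings in at least `k` variables: `I ≅ ⊕ᵢ Sᵢ(-sᵢ)` as graded `K`-vector spaces, where `Sᵢ`
is a graded algebra retract of `S`, i.e. a polynomial ring in `dd i ≥ k` variables. -/
def HilbertDecomp1 {K : Type} [Field K] {n : ℕ} (I : Ideal (MvPolynomial (Fin n) K))
    (k : ℕ) : Prop :=
  ∃ (ι : Type) (_ : Fintype ι) (dd : ι → ℕ) (s : ι → ℤ),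
    (∀ i, k ≤ dd i) ∧ ∀ j : ℤ, hilbZ I j = ∑ i, polyHilb (dd i) (j - s i)

/-- The Hilbert depth of `I` in the standard graded sense. -/
def hdepth1 {K : Type} [Field K] {n : ℕ} (I : Ideal (MvPolynomial (Fin n) K)) : ℕ∞ :=
  sSup {k : ℕ∞ | ∃ m : ℕ, HilbertDecomp1 I m ∧ k = m}

/-- The set of exponent vectors `u + ℕ^Z`, corresponding to the Stanley space `x^u K[Z]`. -/
def cone {n : ℕ} (u : Fin n →₀ ℕ) (Z : Finset (Fin n)) : Set (Fin n →₀ ℕ) :=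
  {a | (∀ j, u j ≤ a j) ∧ ∀ j ∉ Z, a j = u j}

/-- A Stanley decomposition, with all Stanley spaces of dimension at least `k`, of the
`ℤⁿ`-graded module whose monomial basis has exponent set `A`. -/
def StanleyPartN {n : ℕ} (A : Set (Fin n →₀ ℕ)) (k : ℕ) : Prop :=
  ∃ (ι : Type) (_ : Fintype ι) (u : ι → (Fin n →₀ ℕ)) (Z : ι → Finset (Fin n)),
    (∀ i, k ≤ (Z i).card) ∧ (∀ i, cone (u i) (Z i) ⊆ A) ∧
    (∀ a ∈ A, ∃! i, a ∈ cone (u i) (Z i))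

/-- The multigraded Stanley depth of the `ℤⁿ`-graded module whose monomial basis has
exponent set `A`. -/
def sdepthN {n : ℕ} (A : Set (Fin n →₀ ℕ)) : ℕ∞ :=
  sSup {k : ℕ∞ | ∃ m : ℕ, StanleyPartN A m ∧ k = m}

/-- A multigraded Hilbert decomposition of the monomial ideal `I`, with all retracts
polynomial rings in at least `k` variables: the multigraded Hilbert function of `I`
(which takes values 0 and 1) equals the sum of the multigraded Hilbert functions of
the shifted retracts `x^{u i} K[Z i]`. -/
def HilbertDecompN {K : Type} [Field K] {n : ℕ} (I : Ideal (MvPolynomial (Fin n) K))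
    (k : ℕ) : Prop :=
  ∃ (ι : Type) (_ : Fintype ι) (u : ι → (Fin n →₀ ℕ)) (Z : ι → Finset (Fin n)),
    (∀ i, k ≤ (Z i).card) ∧
    (∀ a : Fin n →₀ ℕ, (a ∈ expSet I ↔ ∃ i, a ∈ cone (u i) (Z i)) ∧
      (∀ i i', a ∈ cone (u i) (Z i) → a ∈ cone (u i') (Z i') → i = i'))

/-- The multigraded Hilbert depth of a monomial ideal `I`. -/
def hdepthN {K : Type} [Field K] {n : ℕ} (I : Ideal (MvPolynomial (Fin n) K)) : ℕ∞ :=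
  sSup {k : ℕ∞ | ∃ m : ℕ, HilbertDecompN I m ∧ k = m}

/-- The graded maximal ideal `(x_1, …, x_n)`. -/
def maxIdeal (K : Type) [Field K] (n : ℕ) : Ideal (MvPolynomial (Fin n) K) :=
  Ideal.span (Set.range X)

/-- The depth of a module `M` over `S = K[x_1,…,x_n]` with respect to the graded maximal
ideal: the supremum of lengths of `M`-regular sequences in `(x_1,…,x_n)`. -/
def mdepth (K : Type) [Field K] (n : ℕ) (M : Type)
    [AddCommGroup M] [Module (MvPolynomial (Fin n) K) M] : ℕ∞ :=
  sSup {k : ℕ∞ | ∃ rs : List (MvPolynomial (Fin n) K),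
    (∀ r ∈ rs, r ∈ maxIdeal K n) ∧ RingTheory.Sequence.IsRegular M rs ∧ k = rs.length}

/-- The quotient module `I/J` for ideals `J ≤ I`. -/
def quotMod {K : Type} [Field K] {n : ℕ} (I J : Ideal (MvPolynomial (Fin n) K)) : Type :=
  ↥I ⧸ (Submodule.comap (Submodule.subtype I) J)

instance {K : Type} [Field K] {n : ℕ} (I J : Ideal (MvPolynomial (Fin n) K)) :
    AddCommGroup (quotMod I J) := by unfold quotMod; infer_instance

instance {K : Type} [Field K] {n : ℕ} (I J : Ideal (MvPolynomial (Fin n) K)) :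
    Module (MvPolynomial (Fin n) K) (quotMod I J) := by unfold quotMod; infer_instance

/-- `ρ_j(I\J)`: the number of squarefree monomials of degree `j` in `I ∖ J`. -/
def rho {K : Type} [Field K] {n : ℕ} (I J : Ideal (MvPolynomial (Fin n) K)) (j : ℕ) : ℕ :=
  Set.ncard {a : Fin n →₀ ℕ | IsSqfree a ∧ edeg a = j ∧ a ∈ expSet I ∧ a ∉ expSet J}

/-- `ρ_j(I)`: the number of squarefree monomials of degree `j` in `I`. -/
def rhoI {K : Type} [Field K] {n : ℕ} (I : Ideal (MvPolynomial (Fin n) K)) (j : ℕ) : ℕ :=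
  Set.ncard {a : Fin n →₀ ℕ | IsSqfree a ∧ edeg a = j ∧ a ∈ expSet I}

/-- `I` is a stable monomial ideal. Here `j` plays the role of `m(u)`, the largest index of
a variable dividing `u = x^a`. -/
def IsStable {K : Type} [Field K] {n : ℕ} (I : Ideal (MvPolynomial (Fin n) K)) : Prop :=
  IsMonomialIdeal I ∧ ∀ a : Fin n →₀ ℕ, (monomial a (1 : K)) ∈ I →
    ∀ j : Fin n, a j ≠ 0 → (∀ l, j < l → a l = 0) → ∀ i, i < j →
      (monomial (a + Finsupp.single i 1 - Finsupp.single j 1) (1 : K)) ∈ I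

/-- `I` is a squarefree stable monomial ideal. -/
def IsSqfreeStable {K : Type} [Field K] {n : ℕ} (I : Ideal (MvPolynomial (Fin n) K)) : Prop :=
  IsSqfreeMonomialIdeal I ∧ ∀ a : Fin n →₀ ℕ, IsSqfree a → (monomial a (1 : K)) ∈ I →
    ∀ j : Fin n, a j ≠ 0 → (∀ l, j < l → a l = 0) → ∀ i, i < j → a i = 0 →
      (monomial (a + Finsupp.single i 1 - Finsupp.single j 1) (1 : K)) ∈ I

/-- `I` is a squarefree strongly stable monomial ideal. -/
def IsSqfreeStronglyStable {K : Type} [Field K] {n : ℕ}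
    (I : Ideal (MvPolynomial (Fin n) K)) : Prop :=
  IsSqfreeMonomialIdeal I ∧ ∀ a : Fin n →₀ ℕ, IsSqfree a → (monomial a (1 : K)) ∈ I →
    ∀ i : Fin n, a i ≠ 0 → ∀ j, j < i → a j = 0 →
      (monomial (a + Finsupp.single j 1 - Finsupp.single i 1) (1 : K)) ∈ I

/-- The exponent vectors of the minimal monomial generators of a monomial ideal:
the monomials of `I` minimal with respect to divisibility. -/
def minGens {K : Type} [Field K] {n : ℕ} (I : Ideal (MvPolynomial (Fin n) K)) :
    Set (Fin n →₀ ℕ) := {a | a ∈ expSet I ∧ ∀ b ∈ expSet I, b ≤ a → b = a}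

/-- `m(u)`: the largest index (1-based) of a variable dividing `x^a`; `0` if `a = 0`. -/
def mvar {n : ℕ} (a : Fin n →₀ ℕ) : ℕ := a.support.sup (fun i => (i : ℕ) + 1)

/-- `m(I) = max { m(u) : u ∈ G(I) }`. -/
def mIdeal {K : Type} [Field K] {n : ℕ} (I : Ideal (MvPolynomial (Fin n) K)) : ℕ :=
  sSup {m | ∃ a ∈ minGens I, m = mvar a}

open MvPolynomial

/-- The `K`-subspace `Aᵢ·xᵢ` of `S`, where `Aᵢ` is the subalgebra generated by `B`. -/
def stSpace {K : Type} [Field K] {n : ℕ} (B : Finset (MvPolynomial (Fin n) K))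
    (x : MvPolynomial (Fin n) K) : Submodule K (MvPolynomial (Fin n) K) :=
  (Subalgebra.toSubmodule (Algebra.adjoin K (B : Set (MvPolynomial (Fin n) K)))).map
    (LinearMap.mulLeft K x)

/-- A standard graded Stanley decomposition of the ideal `I` with all Stanley spaces of
depth at least `k`: a finite family of graded algebra retracts `Sᵢ = K[Bᵢ]` (generated by
`k ≤ |Bᵢ|` linearly independent linear forms) and homogeneous elements `xᵢ ∈ I` with
`Sᵢ ∩ ann(xᵢ) = 0`, such that `I = ⊕ᵢ Sᵢ xᵢ` as graded `K`-vector spaces. -/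
def StanleyDecomp1 {K : Type} [Field K] {n : ℕ} (I : Ideal (MvPolynomial (Fin n) K))
    (k : ℕ) : Prop :=
  ∃ (ι : Type) (_ : Fintype ι) (B : ι → Finset (MvPolynomial (Fin n) K))
    (x : ι → MvPolynomial (Fin n) K) (d : ι → ℕ),
      (∀ i, ∀ b ∈ B i, b ∈ homogeneousSubmodule (Fin n) K 1) ∧
      (∀ i, LinearIndependent K (fun b : (B i : Set (MvPolynomial (Fin n) K)) =>
        (b : MvPolynomial (Fin n) K))) ∧
      (∀ i, k ≤ (B i).card) ∧
      (∀ i, x i ∈ I) ∧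
      (∀ i, x i ∈ homogeneousSubmodule (Fin n) K (d i)) ∧
      (∀ i, ∀ a ∈ Algebra.adjoin K ((B i : Set (MvPolynomial (Fin n) K))),
        a * x i = 0 → a = 0) ∧
      (iSup (fun i => stSpace (B i) (x i)) = Submodule.restrictScalars K I) ∧
      (iSupIndep fun i => stSpace (B i) (x i))

/-- The standard graded Stanley depth of `I`. -/
def sdepth1 {K : Type} [Field K] {n : ℕ} (I : Ideal (MvPolynomial (Fin n) K)) : ℕ∞ :=
  sSup {k : ℕ∞ | ∃ m : ℕ, StanleyDecomp1 I m ∧ k = m}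

/-- The subspace `S₁ · V` of `S`. -/
def mulS1 {K : Type} [Field K] {n : ℕ} (V : Submodule K (MvPolynomial (Fin n) K)) :
    Submodule K (MvPolynomial (Fin n) K) :=
  Submodule.span K {p | ∃ l ∈ homogeneousSubmodule (Fin n) K 1, ∃ v ∈ V, p = l * v}

/-- A lexsegment set of monomials of degree `d`. -/
def IsLexSet {n : ℕ} (d : ℕ) (L : Set (Fin n →₀ ℕ)) : Prop :=
  (∀ a ∈ L, edeg a = d) ∧ ∀ a ∈ L, ∀ b : Fin n →₀ ℕ, edeg b = d → lexGT b a → b ∈ L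

/-- `V ⊆ S_d` is a Gotzmann space: `dim_K (S₁·V) = dim_K (S₁·lex(V))`, where `lex(V)` is
spanned by the lexsegment set of monomials of degree `d` of cardinality `dim_K V`. -/
def IsGotzmannSpace {K : Type} [Field K] {n : ℕ} (d : ℕ)
    (V : Submodule K (MvPolynomial (Fin n) K)) : Prop :=
  ∃ L : Finset (Fin n →₀ ℕ), IsLexSet (n := n) d (L : Set (Fin n →₀ ℕ)) ∧ L.card = Module.finrank K ↥V ∧
    Module.finrank K ↥(mulS1 V) =
      Module.finrank K ↥(mulS1 (Submodule.span K
        ((fun a => (monomial a (1 : K))) '' (L : Set (Fin n →₀ ℕ)))))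

/-- `I` is a homogeneous ideal in the standard grading. -/
def IsHomogeneousIdeal {K : Type} [Field K] {n : ℕ}
    (I : Ideal (MvPolynomial (Fin n) K)) : Prop :=
  ∀ p ∈ I, ∀ k : ℕ, homogeneousComponent k p ∈ I

/-- `I` is a Gotzmann ideal: each homogeneous component `I_k` is a Gotzmann space. -/
def IsGotzmannIdeal {K : Type} [Field K] {n : ℕ}
    (I : Ideal (MvPolynomial (Fin n) K)) : Prop :=
  IsHomogeneousIdeal I ∧ ∀ k : ℕ,
    IsGotzmannSpace k ((Submodule.restrictScalars K I) ⊓ homogeneousSubmodule (Fin n) K k)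

/-- `I` is generated by homogeneous elements of degree `d`. -/
def GenInDegHomog {K : Type} [Field K] {n : ℕ} (I : Ideal (MvPolynomial (Fin n) K))
    (d : ℕ) : Prop :=
  ∃ G : Set (MvPolynomial (Fin n) K), (∀ g ∈ G, g ∈ homogeneousSubmodule (Fin n) K d) ∧
    I = Ideal.span G

/-!
If `I` is generated by monomials of degree `d`, then `μ(I)` is the number of degree-`d` monomials
of `I`: these generate `I`, and for any finite generating set `F` they lie in the span of the
degree-`d` components of the elements of `F`, since the degree-`d` component of `c * f` is
`c(0) • f_d` when `f` has no terms below degree `d`.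
As the lexicographic order is total, two lexsegments of degree `d'` of the same size coincide.
Multiplication by `x_1^(d'-d)` maps the degree-`d` monomials of `I` injectively onto a lexsegment
of degree `d'`, because `x_1` is the largest variable; having `μ(I) = μ(I')` elements, it is the
set of degree-`d'` monomials of `I'`.
-/

lemma edeg_eq_degree {n : ℕ} (a : Fin n →₀ ℕ) : edeg a = a.degree :=
  (Finsupp.degree_eq_sum a).symm

lemma edeg_add {n : ℕ} (a b : Fin n →₀ ℕ) : edeg (a + b) = edeg a + edeg b := by
  simp only [edeg_eq_degree, map_add]

lemma edeg_single {n : ℕ} (i : Fin n) (k : ℕ) : edeg (Finsupp.single i k) = k := by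
  rw [edeg_eq_degree, Finsupp.degree_single]

lemma lexGT_iff_toLex_lt {n : ℕ} {a b : Fin n →₀ ℕ} : lexGT b a ↔ toLex a < toLex b := by
  simp only [lexGT, Finsupp.Lex.lt_iff, eq_comm]
  rfl

lemma lexGT_or_lexGT_of_ne {n : ℕ} {a b : Fin n →₀ ℕ} (h : a ≠ b) : lexGT a b ∨ lexGT b a := by
  simp only [lexGT_iff_toLex_lt]
  exact lt_or_gt_of_ne (toLex.injective.ne h.symm)

lemma lexGT_add_right_iff {n : ℕ} {a b c : Fin n →₀ ℕ} : lexGT (b + c) (a + c) ↔ lexGT b a := by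
  simp only [lexGT, Finsupp.add_apply, add_left_inj, add_lt_add_iff_right]

lemma lexGT.apply_zero_le {n : ℕ} (hn : 0 < n) {a b : Fin n →₀ ℕ} (h : lexGT b a) :
    a ⟨0, hn⟩ ≤ b ⟨0, hn⟩ := by
  obtain ⟨i, hlt, hi⟩ := h
  rcases (show (⟨0, hn⟩ : Fin n) ≤ i from Nat.zero_le _).eq_or_lt with rfl | h0
  · exact hi.le
  · exact (hlt _ h0).ge

lemma finite_setOf_edeg_eq {n : ℕ} (d : ℕ) : {a : Fin n →₀ ℕ | edeg a = d}.Finite := by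
  simpa only [edeg_eq_degree] using Finsupp.finite_of_degree_eq d

section IsLexSet

variable {n d : ℕ} {U V L : Set (Fin n →₀ ℕ)}

lemma IsLexSet.finite (hL : IsLexSet d L) : L.Finite :=
  (finite_setOf_edeg_eq d).subset hL.1

lemma IsLexSet.subset_or_subset (hU : IsLexSet d U) (hV : IsLexSet d V) : U ⊆ V ∨ V ⊆ U := by
  by_contra! h
  obtain ⟨u, hu, huV⟩ := Set.not_subset.mp h.1
  obtain ⟨v, hv, hvU⟩ := Set.not_subset.mp h.2
  rcases lexGT_or_lexGT_of_ne (ne_of_mem_of_not_mem hu hvU) with huv | hvu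
  · exact huV (hV.2 v hv u (hU.1 u hu) huv)
  · exact hvU (hU.2 u hu v (hV.1 v hv) hvu)

lemma IsLexSet.eq_of_ncard_eq (hU : IsLexSet d U) (hV : IsLexSet d V)
    (h : U.ncard = V.ncard) : U = V := by
  rcases hU.subset_or_subset hV with hUV | hVU
  · exact Set.eq_of_subset_of_ncard_le hUV h.ge hV.finite
  · exact (Set.eq_of_subset_of_ncard_le hVU h.le hU.finite).symm

lemma IsLexSet.image_add_single_zero (hn : 0 < n) (hL : IsLexSet d L) (k : ℕ) :
    IsLexSet (d + k) ((· + Finsupp.single ⟨0, hn⟩ k) '' L) := by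
  refine ⟨?_, ?_⟩
  · rintro _ ⟨a, ha, rfl⟩
    rw [edeg_add, edeg_single, hL.1 a ha]
  · rintro _ ⟨a, ha, rfl⟩ b hb hba
    have hk : Finsupp.single ⟨0, hn⟩ k ≤ b := by
      intro i
      rcases eq_or_ne (⟨0, hn⟩ : Fin n) i with rfl | hi
      · simpa using le_of_add_le_right (hba.apply_zero_le hn)
      · simp [hi]
    refine ⟨b - Finsupp.single ⟨0, hn⟩ k, hL.2 a ha _ ?_ ?_, tsub_add_cancel_of_le hk⟩
    · have := edeg_add (b - Finsupp.single ⟨0, hn⟩ k) (Finsupp.single ⟨0, hn⟩ k)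
      rw [tsub_add_cancel_of_le hk, hb, edeg_single] at this
      omega
    · rwa [← lexGT_add_right_iff (c := Finsupp.single ⟨0, hn⟩ k), tsub_add_cancel_of_le hk]

end IsLexSet

lemma IsLexsegment.isLexSet {K : Type} [Field K] {n : ℕ} {I : Ideal (MvPolynomial (Fin n) K)}
    (hI : IsLexsegment I) (d : ℕ) : IsLexSet d (expSet I ∩ {a | edeg a = d}) :=
  ⟨fun _ ha => ha.2, fun a ha b hb hba => ⟨hI.2 a b ha.1 (hb.trans ha.2.symm) hba, hb⟩⟩

lemma MvPolynomial.homogeneousComponent_mul_of_le_degree {σ R : Type*} [CommSemiring R] {d : ℕ}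
    (c : MvPolynomial σ R) {f : MvPolynomial σ R} (hf : ∀ b ∈ f.support, d ≤ b.degree) :
    homogeneousComponent d (c * f) = coeff 0 c • homogeneousComponent d f := by
  classical
  ext b
  simp only [coeff_homogeneousComponent, coeff_smul, smul_eq_mul, mul_ite, mul_zero]
  split_ifs with hb
  · rw [coeff_mul, Finset.sum_eq_single (0, b)]
    · rintro ⟨u, v⟩ huv hne
      rw [Finset.HasAntidiagonal.mem_antidiagonal] at huv
      dsimp only at huv ⊢
      have hu : u ≠ 0 := by
        rintro rfl
        rw [zero_add] at huv
        exact hne (by rw [huv])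
      have hv : v.degree < d := by
        have := (Finsupp.degree_eq_zero_iff u).not.mpr hu
        rw [← hb, ← huv, map_add]
        omega
      rw [notMem_support_iff.mp fun hv' => (hf v hv').not_gt hv, mul_zero]
    · exact fun h => absurd (Finset.HasAntidiagonal.mem_antidiagonal.mpr (zero_add b)) h
  · rfl

lemma MvPolynomial.span_monomial_image_add {σ R : Type*} [CommSemiring R] (s : σ →₀ ℕ)
    (A : Set (σ →₀ ℕ)) :
    Ideal.span ((fun a => monomial a (1 : R)) '' ((· + s) '' A)) =
      Ideal.span {monomial s 1} * Ideal.span ((fun a => monomial a (1 : R)) '' A) := by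
  rw [Ideal.span_mul_span', Set.singleton_mul, Set.image_image, Set.image_image]
  simp_rw [monomial_mul, one_mul, add_comm]

section GenBy

variable {K : Type} [Field K] {n d : ℕ} {I : Ideal (MvPolynomial (Fin n) K)}

lemma GenBy.le_edeg_of_mem_support (hI : GenBy I fun a => edeg a = d) {f : MvPolynomial (Fin n) K}
    (hf : f ∈ I) {b : Fin n →₀ ℕ} (hb : b ∈ f.support) : d ≤ edeg b := by
  obtain ⟨G, hG, rfl⟩ := hI
  obtain ⟨a, ha, hab⟩ := (mem_ideal_span_monomial_image.mp hf) b hb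
  rw [← hG a ha, edeg_eq_degree, edeg_eq_degree]
  exact Finsupp.degree_mono hab

lemma GenBy.eq_span_monomials (hI : GenBy I fun a => edeg a = d) :
    I = Ideal.span ((fun a => monomial a (1 : K)) '' (expSet I ∩ {a | edeg a = d})) := by
  refine le_antisymm ?_ (Ideal.span_le.mpr ?_)
  · obtain ⟨G, hG, hIG⟩ := hI
    conv_lhs => rw [hIG]
    exact Ideal.span_mono (Set.image_mono fun a ha =>
      ⟨hIG ▸ Ideal.subset_span ⟨a, ha, rfl⟩, hG a ha⟩)
  · rintro _ ⟨a, ha, rfl⟩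
    exact ha.1

lemma GenBy.ncard_le_card (hI : GenBy I fun a => edeg a = d)
    {F : Finset (MvPolynomial (Fin n) K)} (hF : I = Ideal.span F) :
    (expSet I ∩ {a | edeg a = d}).ncard ≤ F.card := by
  classical
  set A := expSet I ∩ {a | edeg a = d}
  have hspan : (fun a => monomial a (1 : K)) '' A ⊆
      Submodule.span K (F.image (homogeneousComponent d) : Set (MvPolynomial (Fin n) K)) := by
    rintro _ ⟨a, ha, rfl⟩
    obtain ⟨c, -, hc⟩ := Submodule.mem_span_finset.mp (hF ▸ ha.1 : monomial a (1 : K) ∈ _)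
    have hhom : homogeneousComponent d (monomial a (1 : K)) = monomial a 1 :=
      homogeneousComponent_eq_self (isHomogeneous_monomial _ ((edeg_eq_degree a).symm.trans ha.2))
    change monomial a (1 : K) ∈ _
    rw [← hhom, ← hc, map_sum]
    refine Submodule.sum_mem _ fun f hf => ?_
    rw [smul_eq_mul, homogeneousComponent_mul_of_le_degree _ fun b hb => ?_]
    · exact Submodule.smul_mem _ _ (Submodule.subset_span (by simpa using ⟨f, hf, rfl⟩))
    · rw [← edeg_eq_degree]
      exact hI.le_edeg_of_mem_support (hF ▸ Ideal.subset_span hf) hb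
  have hli : LinearIndepOn K id ((fun a => monomial a (1 : K)) '' A) := by
    have : LinearIndependent K fun a : Fin n →₀ ℕ => monomial a (1 : K) := by
      simpa only [coe_basisMonomials] using (basisMonomials (Fin n) K).linearIndependent
    exact (this.linearIndepOn (s := A)).id_image
  obtain ⟨hfin, hcard⟩ := exists_finite_card_le_of_finite_of_linearIndependent_of_span
    (Set.toFinite _) hli hspan
  calc A.ncard = ((fun a => monomial a (1 : K)) '' A).ncard :=
        (Set.ncard_image_of_injective _ (monomial_left_injective one_ne_zero)).symm
    _ ≤ _ := (Set.ncard_eq_toFinset_card _ hfin).trans_le hcard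
    _ ≤ F.card := by simpa using Finset.card_image_le

lemma GenBy.mu_eq_ncard (hI : GenBy I fun a => edeg a = d) :
    mu I = (expSet I ∩ {a | edeg a = d}).ncard := by
  classical
  have hfin : (expSet I ∩ {a | edeg a = d}).Finite :=
    (finite_setOf_edeg_eq d).subset Set.inter_subset_right
  have hmem : (expSet I ∩ {a | edeg a = d}).ncard ∈
      {m | ∃ G : Finset (MvPolynomial (Fin n) K), G.card = m ∧ I = Ideal.span (G : Set _)} := by
    refine ⟨hfin.toFinset.image fun a => monomial a (1 : K), ?_, ?_⟩
    · rw [Finset.card_image_of_injective _ (monomial_left_injective one_ne_zero),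
        Set.ncard_eq_toFinset_card _ hfin]
    · rw [Finset.coe_image, Set.Finite.coe_toFinset]
      exact hI.eq_span_monomials
  exact le_antisymm (Nat.sInf_le hmem)
    (le_csInf ⟨_, hmem⟩ fun m ⟨F, hF, hIF⟩ => hF ▸ hI.ncard_le_card hIF)

end GenBy

/-- Corollary `lex_ideals`(a). Suppose `I` and `I'` are lexsegment
ideals of `S = K[x_1,…,x_n]` generated by monomials of degree `d` and `d'` respectively,
with `μ(I) = μ(I')` and `d' ≥ d`. Then `I' = x_1^{d'−d} · I`. -/
theorem lexsegment_eq_shift {K : Type} [Field K] {n d d' : ℕ} (hn : 0 < n)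
    (I I' : Ideal (MvPolynomial (Fin n) K))
    (hlex : IsLexsegment I) (hlex' : IsLexsegment I')
    (hgen : GenBy I (fun a => edeg a = d)) (hgen' : GenBy I' (fun a => edeg a = d'))
    (hmu : mu I = mu I') (hdd : d ≤ d') :
    I' = Ideal.span {(X (⟨0, hn⟩ : Fin n) : MvPolynomial (Fin n) K) ^ (d' - d)} * I := by
  have hshift := (hlex.isLexSet d).image_add_single_zero hn (d' - d)
  rw [Nat.add_sub_cancel' hdd] at hshift
  have hG : (· + Finsupp.single ⟨0, hn⟩ (d' - d)) '' (expSet I ∩ {a | edeg a = d}) =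
      expSet I' ∩ {a | edeg a = d'} := by
    refine hshift.eq_of_ncard_eq (hlex'.isLexSet d') ?_
    rw [Set.ncard_image_of_injective _ (add_left_injective _), ← hgen.mu_eq_ncard, hmu,
      hgen'.mu_eq_ncard]
  rw [hgen'.eq_span_monomials, ← hG, span_monomial_image_add, ← hgen.eq_span_monomials,
    X_pow_eq_monomial]
end
end

section
/- Let k be a positive integer and I a squarefree monomial ideal of S = K[x_1,…,x_n]. If J is another squarefree monomial ideal of S generated by monomials of degrees ≥ k, then sdepth_n(I) ≥ k if and only if sdepth_n(I + J) ≥ k. -/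
/-!
For a squarefree monomial ideal, a Stanley decomposition with all Stanley spaces of dimension
`≥ k` amounts to a partition of its poset of supports into intervals `[A, B]` with `|B| ≥ k`,
the interval `[A, B]` standing for the Stanley space `x^A K[x_j : j ∈ B]`. Passing from `I` to
`I + J` only adds supports of size `≥ k`, and these can be added to a partition as one-point
intervals. Conversely, from a partition for `I + J` keep the intervals whose bottom is a support
of `I` and cut the remaining supports of `I` into points: they lie above a bottom that comes
from `J`, so they have size `≥ k`.
-/

noncomputable section

open MvPolynomial

open MvPolynomial

section IntervalPartition

variable {α : Type*}

def IsIntervalPartition (F : Set (Finset α)) (k : ℕ) (P : Finset (Finset α × Finset α)) :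
    Prop :=
  (∀ p ∈ P, p.1 ⊆ p.2 ∧ k ≤ p.2.card ∧ Set.Icc p.1 p.2 ⊆ F) ∧
    ∀ S ∈ F, ∃! p, p ∈ P ∧ S ∈ Set.Icc p.1 p.2

namespace IsIntervalPartition

variable {F : Set (Finset α)} {k : ℕ} {P : Finset (Finset α × Finset α)}

theorem filter (hP : IsIntervalPartition F k P) (q : Finset α × Finset α → Prop)
    [DecidablePred q] :
    IsIntervalPartition {S | ∃ p ∈ P, q p ∧ S ∈ Set.Icc p.1 p.2} k (P.filter q) := by
  refine ⟨fun p hp => ?_, ?_⟩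
  · obtain ⟨hp, hq⟩ := Finset.mem_filter.1 hp
    obtain ⟨hsub, hk, -⟩ := hP.1 p hp
    exact ⟨hsub, hk, fun S hS => ⟨p, hp, hq, hS⟩⟩
  · rintro S ⟨p, hp, hq, hS⟩
    refine ⟨p, ⟨Finset.mem_filter.2 ⟨hp, hq⟩, hS⟩, fun p' ⟨hp', hS'⟩ => ?_⟩
    exact (hP.2 S ((hP.1 p hp).2.2 hS)).unique ⟨(Finset.mem_filter.1 hp').1, hS'⟩ ⟨hp, hS⟩

theorem union_singletons [DecidableEq α] (hP : IsIntervalPartition F k P)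
    {D : Set (Finset α)} (hD : D.Finite) (hFD : Disjoint F D) (hDk : ∀ S ∈ D, k ≤ S.card) :
    IsIntervalPartition (F ∪ D) k (P ∪ hD.toFinset.image fun S => (S, S)) := by
  have mem_diag {S : Finset α} {q : Finset α × Finset α} :
      q ∈ hD.toFinset.image (fun T => (T, T)) ∧ S ∈ Set.Icc q.1 q.2 ↔ S ∈ D ∧ q = (S, S) := by
    constructor
    · rintro ⟨hq, hSq⟩
      obtain ⟨T, hT, rfl⟩ := Finset.mem_image.1 hq
      obtain rfl : S = T := le_antisymm hSq.2 hSq.1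
      exact ⟨hD.mem_toFinset.1 hT, rfl⟩
    · rintro ⟨hS, rfl⟩
      exact ⟨Finset.mem_image_of_mem _ (hD.mem_toFinset.2 hS), le_rfl, le_rfl⟩
  refine ⟨fun p hp => ?_, fun S hS => ?_⟩
  · rcases Finset.mem_union.1 hp with hp | hp
    · obtain ⟨hsub, hk, hF⟩ := hP.1 p hp
      exact ⟨hsub, hk, hF.trans Set.subset_union_left⟩
    · obtain ⟨S, hS, rfl⟩ := Finset.mem_image.1 hp
      exact ⟨subset_rfl, hDk S (hD.mem_toFinset.1 hS), fun T hT => Or.inr (mem_diag.1 ⟨hp, hT⟩).1⟩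
  rcases hS with hS | hS
  · obtain ⟨p, ⟨hp, hSp⟩, huniq⟩ := hP.2 S hS
    refine ⟨p, ⟨Finset.mem_union_left _ hp, hSp⟩, fun q ⟨hq, hSq⟩ => ?_⟩
    rcases Finset.mem_union.1 hq with hq | hq
    · exact huniq q ⟨hq, hSq⟩
    · exact (Set.disjoint_left.1 hFD hS (mem_diag.1 ⟨hq, hSq⟩).1).elim
  · obtain ⟨hdiag, hSS⟩ := mem_diag.2 ⟨hS, rfl⟩
    refine ⟨(S, S), ⟨Finset.mem_union_right _ hdiag, hSS⟩, fun q ⟨hq, hSq⟩ => ?_⟩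
    rcases Finset.mem_union.1 hq with hq | hq
    · exact (Set.disjoint_left.1 hFD ((hP.1 q hq).2.2 hSq) hS).elim
    · exact (mem_diag.1 ⟨hq, hSq⟩).2

end IsIntervalPartition

theorem exists_isIntervalPartition_iff_of_subset [Finite α] {F F' : Set (Finset α)} {k : ℕ}
    (hF : IsUpperSet F) (hFF' : F ⊆ F') (hk : ∀ S ∈ F' \ F, k ≤ S.card) :
    (∃ P, IsIntervalPartition F k P) ↔ ∃ P, IsIntervalPartition F' k P := by
  classical
  constructor
  · rintro ⟨P, hP⟩
    exact ⟨_, Set.union_sdiff_cancel hFF' ▸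
      hP.union_singletons (Set.toFinite _) Set.disjoint_sdiff_right hk⟩
  · rintro ⟨P, hP⟩
    set F₀ := {S | ∃ p ∈ P, p.1 ∈ F ∧ S ∈ Set.Icc p.1 p.2}
    have hF₀ : F₀ ⊆ F := fun S ⟨p, _, hp, hS⟩ => hF hS.1 hp
    have hk₀ : ∀ S ∈ F \ F₀, k ≤ S.card := by
      rintro S ⟨hSF, hSF₀⟩
      obtain ⟨p, ⟨hp, hS⟩, -⟩ := hP.2 S (hFF' hSF)
      obtain ⟨hsub, -, hpF'⟩ := hP.1 p hp
      have hpF : p.1 ∉ F := fun h => hSF₀ ⟨p, hp, h, hS⟩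
      exact (hk p.1 ⟨hpF' ⟨le_rfl, hsub⟩, hpF⟩).trans (Finset.card_le_card hS.1)
    exact ⟨_, Set.union_sdiff_cancel hF₀ ▸
      (hP.filter (·.1 ∈ F)).union_singletons (Set.toFinite _) Set.disjoint_sdiff_right hk₀⟩

end IntervalPartition

section SqfreeExponents

variable {n : ℕ}

def indicatorVec (S : Finset (Fin n)) : Fin n →₀ ℕ := Finsupp.indicator S fun _ _ => 1

@[simp]
theorem indicatorVec_apply (S : Finset (Fin n)) (i : Fin n) :
    indicatorVec S i = if i ∈ S then 1 else 0 := by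
  simp [indicatorVec, Finsupp.indicator_apply]

@[simp]
theorem support_indicatorVec (S : Finset (Fin n)) : (indicatorVec S).support = S := by
  ext i
  simp

theorem isSqfree_indicatorVec (S : Finset (Fin n)) : IsSqfree (indicatorVec S) := by
  intro i
  simp only [indicatorVec_apply]
  split_ifs <;> simp

theorem IsSqfree.le_iff_support_subset {g a : Fin n →₀ ℕ} (hg : IsSqfree g) :
    g ≤ a ↔ g.support ⊆ a.support := by
  refine ⟨Finsupp.support_mono, fun h i => ?_⟩
  have := hg i
  by_cases hi : g i = 0
  · omega
  · have := Finsupp.mem_support_iff.1 (h (Finsupp.mem_support_iff.2 hi))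
    omega

theorem IsSqfree.edeg_eq_card_support {a : Fin n →₀ ℕ} (ha : IsSqfree a) :
    edeg a = a.support.card := by
  rw [edeg, ← Finset.sum_subset a.support.subset_univ fun i _ hi => Finsupp.notMem_support_iff.1 hi,
    Finset.card_eq_sum_ones]
  refine Finset.sum_congr rfl fun i hi => ?_
  have := ha i
  have := Finsupp.mem_support_iff.1 hi
  omega

theorem mem_cone_indicatorVec_iff {A B : Finset (Fin n)} (hAB : A ⊆ B) (a : Fin n →₀ ℕ) :
    a ∈ cone (indicatorVec A) B ↔ a.support ∈ Set.Icc A B := by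
  simp only [cone, Set.mem_ofPred_eq, Set.mem_Icc, Finset.subset_iff,
    Finsupp.mem_support_iff, indicatorVec_apply]
  constructor
  · rintro ⟨hle, hout⟩
    refine ⟨fun j hj => ?_, fun j hj => ?_⟩
    · have := hle j
      simp only [hj, if_true] at this
      omega
    · by_contra hjB
      rw [hout j hjB, if_neg fun hjA => hjB (hAB hjA)] at hj
      exact hj rfl
  · rintro ⟨hA, hB⟩
    refine ⟨fun j => ?_, fun j hjB => ?_⟩
    · split_ifs with hj
      · exact Nat.one_le_iff_ne_zero.2 (hA hj)
      · exact Nat.zero_le _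
    · rw [if_neg fun hjA => hjB (hAB hjA)]
      by_contra hj
      exact hjB (hB hj)

theorem indicatorVec_mem_cone_iff {u : Fin n →₀ ℕ} (hu : IsSqfree u) (Z T : Finset (Fin n)) :
    indicatorVec T ∈ cone u Z ↔ T ∈ Set.Icc u.support (u.support ∪ Z) := by
  simp only [cone, Set.mem_ofPred_eq, Set.mem_Icc, Finset.subset_iff,
    Finsupp.mem_support_iff, Finset.mem_union, indicatorVec_apply]
  constructor
  · rintro ⟨hle, hout⟩
    refine ⟨fun j hj => ?_, fun j hj => ?_⟩
    · have := hle j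
      split_ifs at this <;> omega
    · by_contra h
      obtain ⟨hu0, hjZ⟩ := not_or.1 h
      have := hout j hjZ
      rw [if_pos hj] at this
      omega
  · rintro ⟨hsupp, hT⟩
    refine ⟨fun j => ?_, fun j hjZ => ?_⟩
    · have := hu j
      split_ifs with hj
      · exact this
      · by_contra h
        exact hj (hsupp (by omega))
    · have := hu j
      split_ifs with hj
      · have := (hT hj).resolve_right hjZ
        omega
      · by_contra h
        exact hj (hsupp (Ne.symm h))

end SqfreeExponents

section StanleyDecomposition

variable {n : ℕ} {A : Set (Fin n →₀ ℕ)} {F : Set (Finset (Fin n))} {k : ℕ}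

theorem IsIntervalPartition.stanleyPartN (hA : ∀ a, a ∈ A ↔ a.support ∈ F)
    {P : Finset (Finset (Fin n) × Finset (Fin n))} (hP : IsIntervalPartition F k P) :
    StanleyPartN A k := by
  have mem_cone (p : P) (a : Fin n →₀ ℕ) :
      a ∈ cone (indicatorVec p.1.1) p.1.2 ↔ a.support ∈ Set.Icc p.1.1 p.1.2 :=
    mem_cone_indicatorVec_iff (hP.1 p.1 p.2).1 a
  refine ⟨P, inferInstance, fun p => indicatorVec p.1.1, fun p => p.1.2,
    fun p => (hP.1 p.1 p.2).2.1, fun p a ha => ?_, fun a ha => ?_⟩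
  · exact (hA a).2 ((hP.1 p.1 p.2).2.2 ((mem_cone p a).1 ha))
  · obtain ⟨p, ⟨hp, hap⟩, huniq⟩ := hP.2 _ ((hA a).1 ha)
    exact ⟨⟨p, hp⟩, (mem_cone ⟨p, hp⟩ a).2 hap,
      fun q hq => Subtype.ext (huniq q ⟨q.2, (mem_cone q a).1 hq⟩)⟩

theorem StanleyPartN.exists_isIntervalPartition (hA : ∀ a, a ∈ A ↔ a.support ∈ F)
    (h : StanleyPartN A k) : ∃ P, IsIntervalPartition F k P := by
  classical
  obtain ⟨ι, _, u, Z, hZ, hcone, hcover⟩ := h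
  -- Only cones with a squarefree apex contain squarefree vectors, and `F` is read off those.
  refine ⟨(Finset.univ.filter fun i => IsSqfree (u i)).image
    fun i => ((u i).support, (u i).support ∪ Z i), fun p hp => ?_, fun S hS => ?_⟩
  · obtain ⟨i, hi, rfl⟩ := Finset.mem_image.1 hp
    have hu := (Finset.mem_filter.1 hi).2
    refine ⟨Finset.subset_union_left, (hZ i).trans (Finset.card_le_card Finset.subset_union_right),
      fun T hT => ?_⟩
    rw [← support_indicatorVec T, ← hA]
    exact hcone i ((indicatorVec_mem_cone_iff hu _ _).2 hT)
  · obtain ⟨i, hi, huniq⟩ := hcover (indicatorVec S) ((hA _).2 (by rwa [support_indicatorVec]))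
    have hu : IsSqfree (u i) := fun j => (hi.1 j).trans (isSqfree_indicatorVec S j)
    refine ⟨_, ⟨Finset.mem_image_of_mem _ (Finset.mem_filter.2 ⟨Finset.mem_univ _, hu⟩),
      (indicatorVec_mem_cone_iff hu _ _).1 hi⟩, fun q ⟨hq, hSq⟩ => ?_⟩
    obtain ⟨j, hj, rfl⟩ := Finset.mem_image.1 hq
    rw [huniq j ((indicatorVec_mem_cone_iff (Finset.mem_filter.1 hj).2 _ _).2 hSq)]

theorem stanleyPartN_iff_exists_isIntervalPartition (hA : ∀ a, a ∈ A ↔ a.support ∈ F) :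
    StanleyPartN A k ↔ ∃ P, IsIntervalPartition F k P :=
  ⟨StanleyPartN.exists_isIntervalPartition hA, fun ⟨_, hP⟩ => hP.stanleyPartN hA⟩

theorem StanleyPartN.mono {m : ℕ} (h : StanleyPartN A m) (hkm : k ≤ m) : StanleyPartN A k :=
  let ⟨ι, hι, u, Z, hZ, hcone, hcover⟩ := h
  ⟨ι, hι, u, Z, fun i => hkm.trans (hZ i), hcone, hcover⟩

theorem le_sdepthN_iff (hk : 0 < k) : (k : ℕ∞) ≤ sdepthN A ↔ StanleyPartN A k := by
  obtain ⟨k, rfl⟩ := Nat.exists_eq_add_one.2 hk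
  rw [Nat.cast_add_one, ENat.add_one_le_iff (ENat.natCast_ne_top k), sdepthN, lt_sSup_iff]
  constructor
  · rintro ⟨_, ⟨m, hm, rfl⟩, hkm⟩
    exact hm.mono (by exact_mod_cast hkm)
  · exact fun h => ⟨_, ⟨k + 1, h, rfl⟩, by exact_mod_cast k.lt_succ_self⟩

end StanleyDecomposition

theorem mem_expSet_span_iff {K : Type} [Field K] {n : ℕ} {G : Set (Fin n →₀ ℕ)}
    (hG : ∀ g ∈ G, IsSqfree g) (a : Fin n →₀ ℕ) :
    a ∈ expSet (Ideal.span ((fun b => monomial b (1 : K)) '' G)) ↔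
      a.support ∈ upperClosure (Finsupp.support '' G) := by
  classical
  rw [expSet, Set.mem_ofPred_eq, mem_ideal_span_monomial_image, support_monomial,
    if_neg one_ne_zero, mem_upperClosure, Set.exists_mem_image]
  simp only [Finset.mem_singleton, forall_eq]
  exact exists_congr fun g => and_congr_right fun hg => (hG g hg).le_iff_support_subset

/-- Corollary `rem-k`. Let `k` be a positive integer and `I` a
squarefree monomial ideal of `S = K[x_1,…,x_n]`. If `J` is another squarefree monomial
ideal of `S`, generated by monomials of degrees `≥ k`, then `sdepth_n(I) ≥ k` if and only
if `sdepth_n(I + J) ≥ k`. -/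
theorem sdepthN_ge_iff_add {K : Type} [Field K] {n : ℕ} (k : ℕ) (hk : 0 < k)
    (I J : Ideal (MvPolynomial (Fin n) K)) (hI : IsSqfreeMonomialIdeal I)
    (hJ : GenBy J (fun a => IsSqfree a ∧ k ≤ edeg a)) :
    (k : ℕ∞) ≤ sdepthN (expSet I) ↔ (k : ℕ∞) ≤ sdepthN (expSet (I + J)) := by
  obtain ⟨G, hG, rfl⟩ := hI
  obtain ⟨H, hH, rfl⟩ := hJ
  have hGH : ∀ g ∈ G ∪ H, IsSqfree g := fun g hg => hg.elim (hG g) fun hg => (hH g hg).1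
  rw [Ideal.add_eq_sup, ← Ideal.span_union, ← Set.image_union, le_sdepthN_iff hk,
    le_sdepthN_iff hk, stanleyPartN_iff_exists_isIntervalPartition (mem_expSet_span_iff hG),
    stanleyPartN_iff_exists_isIntervalPartition (mem_expSet_span_iff hGH)]
  refine exists_isIntervalPartition_iff_of_subset (upperClosure _).upper
    (UpperSet.coe_subset_coe.2 (upperClosure_anti (Set.image_mono Set.subset_union_left))) ?_
  rintro S ⟨hS, hSG⟩
  obtain ⟨_, ⟨g, hg, rfl⟩, hgS⟩ := mem_upperClosure.1 hS
  have hgH : g ∈ H :=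
    hg.resolve_left fun hgG => hSG (mem_upperClosure.2 ⟨_, ⟨g, hgG, rfl⟩, hgS⟩)
  calc k ≤ edeg g := (hH g hgH).2
    _ = g.support.card := (hH g hgH).1.edeg_eq_card_support
    _ ≤ S.card := Finset.card_le_card hgS
end
end
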